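/- Let n ≥ 5 be odd and let G be the complete graph K_n with one edge uv removed. Then G cannot be covered by (n−1)/2 Hamilton cycles, i.e. there is no set of (n−1)/2 Hamilton cycles of G whose union of edge sets equals E(G). -/

import Mathlib

/-!
Each Hamilton cycle of `K_n - uv` has `n` edges, so `(n - 1)/2` of them have `n(n - 1)/2` edges
counted with multiplicity, exactly one more than the graph has: if they cover the graph, at most
one edge is covered twice. But every cycle meets `u` in two edges, giving `n - 1` incidences on the
`n - 2` edges at `u`, so some edge at `u` is covered twice, and likewise at `v`. That edge must
then be `uv`, which is not in the graph.
-/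

open Finset SimpleGraph

theorem Finset.eq_of_two_le_of_sum_eq_card_add_one {α : Type*} [DecidableEq α] {s : Finset α}
    {c : α → ℕ} (hpos : ∀ x ∈ s, 1 ≤ c x) (hsum : ∑ x ∈ s, c x = #s + 1) {a b : α}
    (ha : a ∈ s) (hb : b ∈ s) (h2a : 2 ≤ c a) (h2b : 2 ≤ c b) : a = b := by
  by_contra hab
  have : #s + 2 ≤ ∑ x ∈ s, c x :=
    calc #s + 2 = ∑ x ∈ s, (1 + ((if a = x then 1 else 0) + if b = x then 1 else 0)) := by
          simp [sum_add_distrib, ha, hb]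
      _ ≤ ∑ x ∈ s, c x := sum_le_sum fun x hx => by
          have := hpos x hx
          split_ifs <;> subst_vars <;> first | exact absurd rfl hab | omega
  omega

theorem Nat.choose_two_two_mul_add_one (m : ℕ) : (2 * m + 1).choose 2 = m * (2 * m + 1) := by
  rw [Nat.choose_two_right, Nat.add_sub_cancel, mul_comm, mul_assoc,
    Nat.mul_div_cancel_left _ two_pos]

namespace SimpleGraph

variable {V : Type*} {G : SimpleGraph V}

theorem Walk.IsHamiltonianCycle.isRegularOfDegree_two [Fintype V] [DecidableEq V] {a : V}
    {p : G.Walk a a} (hp : p.IsHamiltonianCycle) [DecidableRel p.toSubgraph.spanningCoe.Adj] :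
    p.toSubgraph.spanningCoe.IsRegularOfDegree 2 := fun w => by
  rw [← card_neighborFinset_eq_degree, neighborFinset, ← Set.ncard_eq_toFinset_card']
  exact hp.isCycle.ncard_neighborSet_toSubgraph_eq_two (hp.mem_support w)

theorem IsRegularOfDegree.two_mul_card_edgeFinset [Fintype V] [DecidableRel G.Adj] {d : ℕ}
    (h : G.IsRegularOfDegree d) : 2 * #G.edgeFinset = Fintype.card V * d := by
  rw [← sum_degrees_eq_twice_card_edges, sum_congr rfl fun v _ => h.degree_eq v, sum_const,
    card_univ, smul_eq_mul]

section coverMultiplicity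

variable {ι : Type*} [Fintype ι] {H : ι → SimpleGraph V} [∀ i, DecidableRel (H i).Adj]

variable (H) in
def coverMultiplicity (e : Sym2 V) : ℕ := #{i | e ∈ (H i).edgeSet}

theorem sum_coverMultiplicity (s : Finset (Sym2 V)) :
    ∑ e ∈ s, coverMultiplicity H e = ∑ i, #{e ∈ s | e ∈ (H i).edgeSet} :=
  sum_card_bipartiteAbove_eq_sum_card_bipartiteBelow _

variable [Fintype V] [DecidableRel G.Adj]

theorem filter_edgeFinset_mem_edgeSet {H : SimpleGraph V} [DecidableRel H.Adj] (h : H ≤ G) :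
    {e ∈ G.edgeFinset | e ∈ H.edgeSet} = H.edgeFinset := by
  ext e
  simpa using fun he => edgeSet_mono h he

theorem filter_incidenceFinset_mem_edgeSet [DecidableEq V] {H : SimpleGraph V}
    [DecidableRel H.Adj] (h : H ≤ G) (w : V) :
    {e ∈ G.incidenceFinset w | e ∈ H.edgeSet} = H.incidenceFinset w := by
  ext e
  simp only [mem_filter, mem_incidenceFinset, incidenceSet, Set.mem_ofPred_eq]
  exact ⟨fun ⟨⟨_, hw⟩, hH⟩ => ⟨hH, hw⟩, fun ⟨hH, hw⟩ => ⟨⟨edgeSet_mono h hH, hw⟩, hH⟩⟩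

theorem sum_coverMultiplicity_edgeFinset (hle : ∀ i, H i ≤ G)
    (hreg : ∀ i, (H i).IsRegularOfDegree 2) :
    ∑ e ∈ G.edgeFinset, coverMultiplicity H e = Fintype.card ι * Fintype.card V := by
  have hcard (i : ι) : #(H i).edgeFinset = Fintype.card V := by
    have := (hreg i).two_mul_card_edgeFinset
    omega
  simp_rw [sum_coverMultiplicity, filter_edgeFinset_mem_edgeSet (hle _), hcard, sum_const,
    card_univ, smul_eq_mul]

variable [DecidableEq V]

theorem exists_two_le_coverMultiplicity_of_degree_lt (hle : ∀ i, H i ≤ G)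
    (hreg : ∀ i, (H i).IsRegularOfDegree 2) {w : V} (hw : G.degree w < 2 * Fintype.card ι) :
    ∃ e ∈ G.incidenceFinset w, 2 ≤ coverMultiplicity H e := by
  have hsum : ∑ e ∈ G.incidenceFinset w, coverMultiplicity H e = 2 * Fintype.card ι := by
    simp_rw [sum_coverMultiplicity, filter_incidenceFinset_mem_edgeSet (hle _),
      card_incidenceFinset_eq_degree, (hreg _).degree_eq, sum_const, card_univ, smul_eq_mul,
      mul_comm]
  refine exists_lt_of_sum_lt (f := fun _ => 1) ?_
  rwa [hsum, ← card_eq_sum_ones, card_incidenceFinset_eq_degree]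

theorem adj_of_forall_mem_edgeSet_of_degree_lt (hle : ∀ i, H i ≤ G)
    (hreg : ∀ i, (H i).IsRegularOfDegree 2) (hcover : ∀ e ∈ G.edgeSet, ∃ i, e ∈ (H i).edgeSet)
    (hcard : Fintype.card ι * Fintype.card V = #G.edgeFinset + 1) {u v : V} (huv : u ≠ v)
    (hu : G.degree u < 2 * Fintype.card ι) (hv : G.degree v < 2 * Fintype.card ι) :
    G.Adj u v := by
  obtain ⟨e, he, he2⟩ := exists_two_le_coverMultiplicity_of_degree_lt hle hreg hu
  obtain ⟨e', he', he'2⟩ := exists_two_le_coverMultiplicity_of_degree_lt hle hreg hv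
  rw [mem_incidenceFinset] at he he'
  have hpos : ∀ e ∈ G.edgeFinset, 1 ≤ coverMultiplicity H e := fun e he => by
    obtain ⟨i, hi⟩ := hcover e (mem_edgeFinset.1 he)
    exact card_pos.2 ⟨i, by simpa using hi⟩
  obtain rfl : e = e' := eq_of_two_le_of_sum_eq_card_add_one hpos
    (by rw [sum_coverMultiplicity_edgeFinset hle hreg, hcard])
    (mem_edgeFinset.2 he.1) (mem_edgeFinset.2 he'.1) he2 he'2
  rw [← mem_edgeSet, ← (Sym2.mem_and_mem_iff huv).1 ⟨he.2, he'.2⟩]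
  exact he.1

end coverMultiplicity

theorem adj_of_isHamiltonianCycle_cover [Fintype V] [DecidableEq V] [DecidableRel G.Adj]
    {ι : Type*} [Fintype ι] {f : ι → Σ x : V, G.Walk x x} (hham : ∀ i, (f i).2.IsHamiltonianCycle)
    (hcover : ∀ e ∈ G.edgeSet, ∃ i, e ∈ (f i).2.edges)
    (hcard : Fintype.card ι * Fintype.card V = #G.edgeFinset + 1) {u v : V} (huv : u ≠ v)
    (hu : G.degree u < 2 * Fintype.card ι) (hv : G.degree v < 2 * Fintype.card ι) :
    G.Adj u v := by
  classical
  refine adj_of_forall_mem_edgeSet_of_degree_lt (H := fun i => (f i).2.toSubgraph.spanningCoe)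
    (fun i => (f i).2.toSubgraph.spanningCoe_le) (fun i => (hham i).isRegularOfDegree_two)
    (fun e he => ?_) hcard huv hu hv
  obtain ⟨i, hi⟩ := hcover e he
  exact ⟨i, by rwa [Subgraph.edgeSet_spanningCoe, Walk.edgeSet_toSubgraph]⟩

variable [Fintype V] [DecidableEq V] {u v : V}
  [DecidableRel ((⊤ : SimpleGraph V).deleteEdges {s(u, v)}).Adj]

theorem card_edgeFinset_top_deleteEdges_edge (huv : u ≠ v) :
    #((⊤ : SimpleGraph V).deleteEdges {s(u, v)}).edgeFinset = (Fintype.card V).choose 2 - 1 := by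
  have : ((⊤ : SimpleGraph V).deleteEdges {s(u, v)}).edgeFinset =
      (⊤ : SimpleGraph V).edgeFinset \ {s(u, v)} := by
    ext e
    simp [edgeSet_deleteEdges]
  rw [this, card_sdiff_of_subset (by simp [huv]), card_singleton,
    card_edgeFinset_top_eq_card_choose_two]

theorem degree_top_deleteEdges_edge (huv : u ≠ v) {w : V} (hw : w ∈ s(u, v)) :
    ((⊤ : SimpleGraph V).deleteEdges {s(u, v)}).degree w = Fintype.card V - 2 := by
  have : ((⊤ : SimpleGraph V).deleteEdges {s(u, v)}).neighborFinset w = ({u, v}ᶜ : Finset V) := by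
    ext x
    simp only [mem_neighborFinset, deleteEdges_adj, top_adj, Set.mem_singleton_iff, Sym2.eq_iff,
      mem_compl, mem_insert, mem_singleton]
    grind
  rw [← card_neighborFinset_eq_degree, this, card_compl, card_pair huv]

end SimpleGraph

/-- For odd `n ≥ 5`, the complete graph `K_n` minus one edge `uv` cannot be
covered by `(n−1)/2` Hamilton cycles. -/
theorem no_cover_Kn_minus_edge (n : ℕ) (hn : 5 ≤ n) (hodd : Odd n)
    (u v : Fin n) (huv : u ≠ v)
    (G : SimpleGraph (Fin n)) (hG : G = (SimpleGraph.completeGraph (Fin n)).deleteEdges {s(u, v)}) :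
    ¬ ∃ f : Fin ((n - 1) / 2) → Σ x : Fin n, G.Walk x x,
        (∀ i, (f i).2.IsHamiltonianCycle) ∧
        (∀ e ∈ G.edgeSet, ∃ i, e ∈ (f i).2.edges) := by
  classical
  rintro ⟨f, hham, hcover⟩
  obtain ⟨m, rfl⟩ := hodd
  have hdeg : ∀ w ∈ s(u, v), G.degree w < 2 * Fintype.card (Fin ((2 * m + 1 - 1) / 2)) := by
    intro w hw
    have : G.degree w = 2 * m + 1 - 2 := by
      subst hG
      convert degree_top_deleteEdges_edge huv hw
      simp
    simp only [this, Fintype.card_fin]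
    omega
  have hcard : #G.edgeFinset = m * (2 * m + 1) - 1 := by
    subst hG
    convert card_edgeFinset_top_deleteEdges_edge huv
    rw [Fintype.card_fin, Nat.choose_two_two_mul_add_one]
  have hadj : G.Adj u v := by
    refine adj_of_isHamiltonianCycle_cover hham hcover ?_ huv (hdeg u (Sym2.mem_mk_left u v))
      (hdeg v (Sym2.mem_mk_right u v))
    rw [hcard, Nat.sub_add_cancel (Nat.mul_pos (by omega) (by omega)), Fintype.card_fin,
      Fintype.card_fin, Nat.add_sub_cancel, Nat.mul_div_cancel_left _ two_pos]
  subst hG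
  simp at hadj
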